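/- Let G be a diagonal real 3×3 matrix whose diagonal entries are positive and pairwise distinct, and let U ∈ O(3). Then a matrix Q ∈ SO(3) satisfies: for every η ∈ ℝ³ the derivative at t = 0 of t ↦ tr(G (I₃ − Uᵀ Q exp(t η^) U)) equals 0, if and only if Q ∈ {I₃, U D₁ Uᵀ, U D₂ Uᵀ, U D₃ Uᵀ}, where D_i = 2 e_i e_iᵀ − I₃ and e_i is the i-th standard basis vector of ℝ³. -/

import Mathlib

open Matrix

/-!
Along `t ↦ Q exp(t A)` the error function has derivative `-tr(M A)` at `t = 0`, where
`M = U G Uᵀ Q`; as `A = η^` ranges over all skew-symmetric matrices this vanishes iff `M` is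
symmetric. Writing `Q = U B Uᵀ` with `B ∈ SO(3)`, this says that `G B` is symmetric. Then
`(G B)ᵀ (G B) = (G B) (G B)ᵀ` gives `Bᵀ G² B = G²`, so `B` commutes with `G²`, whose diagonal
entries are distinct because those of `G` are positive and distinct. Hence `B` is diagonal, and a
diagonal rotation has entries `±1` with product `1`, i.e. `B ∈ {I, D₁, D₂, D₃}`.
-/

/-- The hat map sending `v ∈ ℝ³` to the skew-symmetric matrix `v^` with `v^ w = v × w`. -/
def hat (v : Fin 3 → ℝ) : Matrix (Fin 3) (Fin 3) ℝ :=
  !![0, -v 2, v 1; v 2, 0, -v 0; -v 1, v 0, 0]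

/-- The matrix `D i = 2 eᵢ eᵢᵀ − I₃`. -/
def Dmat (i : Fin 3) : Matrix (Fin 3) (Fin 3) ℝ :=
  (2 : ℝ) • vecMulVec (Pi.single i 1) (Pi.single i 1) - 1

section Derivative

-- Matrices carry no global norm; any normed-algebra structure induces the usual topology, so
-- `NormedSpace.exp` and the derivatives below do not depend on this choice.
attribute [local instance] Matrix.linftyOpNormedRing Matrix.linftyOpNormedAlgebra

variable {𝕂 n : Type*} [RCLike 𝕂] [Fintype n] [DecidableEq n]

theorem Matrix.hasDerivAt_trace_mul_exp_smul (M A : Matrix n n 𝕂) :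
    HasDerivAt (fun t : 𝕂 => (M * NormedSpace.exp (t • A)).trace) (M * A).trace 0 := by
  have hexp := hasDerivAt_exp_smul_const (𝕂 := 𝕂) A 0
  rw [zero_smul, NormedSpace.exp_zero, one_mul] at hexp
  exact (traceLinearMap n 𝕂 𝕂).toContinuousLinearMap.hasFDerivAt.comp_hasDerivAt 0
    (hexp.const_mul M)

theorem Matrix.hasDerivAt_trace_mul_one_sub_mul_exp_smul (G U Q A : Matrix n n 𝕂) :
    HasDerivAt (fun t : 𝕂 => (G * (1 - Uᵀ * Q * NormedSpace.exp (t • A) * U)).trace)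
      (-(U * G * Uᵀ * Q * A).trace) 0 := by
  have h := (hasDerivAt_trace_mul_exp_smul (U * G * Uᵀ * Q) A).const_sub G.trace
  refine h.congr_of_eventuallyEq (Filter.Eventually.of_forall fun t => ?_)
  dsimp only
  rw [mul_sub, mul_one, trace_sub, ← Matrix.mul_assoc, trace_mul_comm]
  simp only [Matrix.mul_assoc]

theorem Matrix.hasDerivAt_trace_mul_one_sub_mul_exp_smul_zero_iff (G U Q A : Matrix n n 𝕂) :
    HasDerivAt (fun t : 𝕂 => (G * (1 - Uᵀ * Q * NormedSpace.exp (t • A) * U)).trace) 0 0 ↔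
      (U * G * Uᵀ * Q * A).trace = 0 := by
  have h := hasDerivAt_trace_mul_one_sub_mul_exp_smul G U Q A
  exact ⟨fun h₀ => neg_eq_zero.mp (h.unique h₀), fun h₀ => by rwa [h₀, neg_zero] at h⟩

end Derivative

theorem trace_mul_hat (M : Matrix (Fin 3) (Fin 3) ℝ) (η : Fin 3 → ℝ) :
    (M * hat η).trace =
      η 0 * (M 1 2 - M 2 1) + η 1 * (M 2 0 - M 0 2) + η 2 * (M 0 1 - M 1 0) := by
  simp only [hat, trace_fin_three, mul_apply, of_apply, cons_val', cons_val_zero, cons_val_one,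
    cons_val, cons_val_fin_one, Fin.sum_univ_three]
  ring

theorem forall_trace_mul_hat_eq_zero_iff (M : Matrix (Fin 3) (Fin 3) ℝ) :
    (∀ η, (M * hat η).trace = 0) ↔ M.IsSymm := by
  refine ⟨fun h => IsSymm.ext fun i j => ?_, fun h η => ?_⟩
  · have h₀ := h ![1, 0, 0]
    have h₁ := h ![0, 1, 0]
    have h₂ := h ![0, 0, 1]
    simp only [trace_mul_hat, cons_val_zero, cons_val_one, cons_val, one_mul, zero_mul, add_zero,
      zero_add, sub_eq_zero] at h₀ h₁ h₂
    fin_cases i <;> fin_cases j <;>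
      first | rfl | exact h₀ | exact h₀.symm | exact h₁ | exact h₁.symm | exact h₂ | exact h₂.symm
  · rw [trace_mul_hat, h.apply 1 2, h.apply 2 0, h.apply 0 1]
    ring

section Orthogonal

variable {α n : Type*} [CommRing α] [Fintype n] [DecidableEq n]

theorem Matrix.isSymm_mul_mul_transpose_iff {U X : Matrix n n α} (hU : Uᵀ * U = 1) :
    (U * X * Uᵀ).IsSymm ↔ X.IsSymm := by
  have conj_isSymm : ∀ {V Y : Matrix n n α}, Y.IsSymm → (V * Y * Vᵀ).IsSymm := fun hY => by
    simp only [IsSymm, transpose_mul, transpose_transpose, hY.eq, Matrix.mul_assoc]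
  refine ⟨fun h => ?_, conj_isSymm⟩
  simpa only [transpose_transpose, Matrix.mul_assoc, hU, Matrix.mul_one, ← Matrix.mul_assoc Uᵀ,
    one_mul] using conj_isSymm (V := Uᵀ) h

theorem Matrix.mul_mul_transpose_injective {U : Matrix n n α} (hU : Uᵀ * U = 1) :
    Function.Injective fun X => U * X * Uᵀ := fun X Y h => by
  have hU' : U * Uᵀ = 1 := mul_eq_one_comm.mp hU
  simpa only [Matrix.mul_assoc, ← Matrix.mul_assoc Uᵀ, hU, hU', one_mul, Matrix.mul_one]
    using congr(Uᵀ * $h * U)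

theorem Matrix.exists_eq_mul_mul_transpose {U Q : Matrix n n α} (hU : Uᵀ * U = 1)
    (hQ : Qᵀ * Q = 1) : ∃ B, Q = U * B * Uᵀ ∧ Bᵀ * B = 1 ∧ B.det = Q.det := by
  have hU' : U * Uᵀ = 1 := mul_eq_one_comm.mp hU
  refine ⟨Uᵀ * Q * U, ?_, ?_, ?_⟩
  · rw [Matrix.mul_assoc, Matrix.mul_assoc, hU', Matrix.mul_one, ← Matrix.mul_assoc, hU', one_mul]
  · simp only [transpose_mul, transpose_transpose, Matrix.mul_assoc]
    rw [← Matrix.mul_assoc U Uᵀ, hU', one_mul, ← Matrix.mul_assoc Qᵀ, hQ, one_mul, hU]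
  · rw [det_mul, det_mul, mul_comm, ← mul_assoc, ← det_mul, hU', det_one, one_mul]

theorem Matrix.isDiag_of_commute_diagonal [NoZeroDivisors α] {d : n → α}
    (hd : Function.Injective d) {B : Matrix n n α} (h : Commute (diagonal d) B) : B.IsDiag := by
  intro i j hij
  have hentry := congrFun (congrFun h.eq i) j
  rw [diagonal_mul, mul_diagonal] at hentry
  have hprod : (d i - d j) * B i j = 0 := by linear_combination hentry
  exact (mul_eq_zero.mp hprod).resolve_left (sub_ne_zero.mpr (hd.ne hij))

theorem Matrix.isDiag_of_isSymm_diagonal_mul [LinearOrder α] [IsStrictOrderedRing α]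
    {d : n → α} (hpos : ∀ i, 0 < d i) (hd : Function.Injective d) {B : Matrix n n α}
    (hB : Bᵀ * B = 1) (hS : (diagonal d * B).IsSymm) : B.IsDiag := by
  have hB' : B * Bᵀ = 1 := mul_eq_one_comm.mp hB
  have hnormal : Bᵀ * (diagonal d * diagonal d) * B = diagonal d * diagonal d := by
    calc Bᵀ * (diagonal d * diagonal d) * B = (diagonal d * B)ᵀ * (diagonal d * B) := by
          simp only [transpose_mul, diagonal_transpose, Matrix.mul_assoc]
      _ = (diagonal d * B) * (diagonal d * B)ᵀ := by rw [hS.eq]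
      _ = diagonal d * diagonal d := by
          simp only [transpose_mul, diagonal_transpose, Matrix.mul_assoc, ← Matrix.mul_assoc B,
            hB', one_mul]
  have hcomm : Commute (diagonal fun i => d i * d i) B := by
    rw [← diagonal_mul_diagonal]
    calc diagonal d * diagonal d * B = B * (Bᵀ * (diagonal d * diagonal d) * B) := by
          simp only [← Matrix.mul_assoc, hB', one_mul]
      _ = B * (diagonal d * diagonal d) := by rw [hnormal]
  refine isDiag_of_commute_diagonal (fun i j hij => ?_) hcomm
  exact hd ((mul_self_inj (hpos i).le (hpos j).le).mp hij)

end Orthogonal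

def diagRotations : Set (Matrix (Fin 3) (Fin 3) ℝ) := {1, Dmat 0, Dmat 1, Dmat 2}

theorem Dmat_eq_diagonal (i : Fin 3) : Dmat i = diagonal fun j => if j = i then 1 else -1 := by
  ext j k
  fin_cases i <;> fin_cases j <;> fin_cases k <;>
    norm_num [Dmat, vecMulVec_apply, one_apply]

theorem isDiag_of_mem_diagRotations {B : Matrix (Fin 3) (Fin 3) ℝ}
    (hB : B ∈ diagRotations) : B.IsDiag := by
  rcases hB with rfl | rfl | rfl | rfl
  · exact isDiag_one
  all_goals exact Dmat_eq_diagonal _ ▸ isDiag_diagonal _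

theorem diagonal_mem_diagRotations {s : Fin 3 → ℝ} (hs : ∀ i, s i = 1 ∨ s i = -1)
    (hprod : ∏ i, s i = 1) : diagonal s ∈ diagRotations := by
  rw [Fin.prod_univ_three] at hprod
  simp only [diagRotations, Set.mem_insert_iff, Set.mem_singleton_iff, Dmat_eq_diagonal,
    ← diagonal_one, diagonal_eq_diagonal_iff, Fin.forall_fin_succ]
  rcases hs 0 with h0 | h0 <;> rcases hs 1 with h1 | h1 <;> rcases hs 2 with h2 | h2 <;>
    simp [h0, h1, h2] at hprod ⊢ <;> norm_num at hprod

theorem mem_diagRotations_of_isDiag {B : Matrix (Fin 3) (Fin 3) ℝ} (hdiag : B.IsDiag)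
    (hB : Bᵀ * B = 1) (hdet : B.det = 1) : B ∈ diagRotations := by
  rw [← hdiag.diagonal_diag] at hB hdet ⊢
  rw [diagonal_transpose, diagonal_mul_diagonal, ← diagonal_one, diagonal_eq_diagonal_iff] at hB
  rw [det_diagonal] at hdet
  exact diagonal_mem_diagRotations (fun i => mul_self_eq_one_iff.mp (hB i)) hdet

theorem isSymm_diagonal_mul_iff_mem_diagRotations {d : Fin 3 → ℝ} (hpos : ∀ i, 0 < d i)
    (hd : Function.Injective d) {B : Matrix (Fin 3) (Fin 3) ℝ} (hB : Bᵀ * B = 1)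
    (hdet : B.det = 1) : (diagonal d * B).IsSymm ↔ B ∈ diagRotations := by
  refine ⟨fun h => mem_diagRotations_of_isDiag (isDiag_of_isSymm_diagonal_mul hpos hd hB h) hB
    hdet, fun h => ?_⟩
  rw [← (isDiag_of_mem_diagRotations h).diagonal_diag, diagonal_mul_diagonal]
  exact (isDiag_diagonal _).isSymm

theorem critical_points_error_function
    (G U Q : Matrix (Fin 3) (Fin 3) ℝ) (hG : G.IsDiag)
    (hGpos : ∀ i, 0 < G i i) (hGdist : ∀ i j, i ≠ j → G i i ≠ G j j)
    (hU : Uᵀ * U = 1) (hQ : Qᵀ * Q = 1) (hQdet : Q.det = 1) :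
    (∀ η : Fin 3 → ℝ,
        HasDerivAt
          (fun t : ℝ => (G * (1 - Uᵀ * Q * NormedSpace.exp (t • hat η) * U)).trace)
          0 0)
      ↔ Q ∈ ({1, U * Dmat 0 * Uᵀ, U * Dmat 1 * Uᵀ, U * Dmat 2 * Uᵀ} :
          Set (Matrix (Fin 3) (Fin 3) ℝ)) := by
  have hU' : U * Uᵀ = 1 := mul_eq_one_comm.mp hU
  obtain ⟨B, rfl, hB, hBdet⟩ := exists_eq_mul_mul_transpose hU hQ
  obtain ⟨d, rfl⟩ : ∃ d, G = diagonal d := ⟨G.diag, hG.diagonal_diag.symm⟩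
  simp only [diagonal_apply_eq] at hGpos hGdist
  have hd : Function.Injective d := fun i j h => by_contra fun hij => hGdist i j hij h
  calc _ ↔ ∀ η, (U * diagonal d * Uᵀ * (U * B * Uᵀ) * hat η).trace = 0 :=
        forall_congr' fun η => hasDerivAt_trace_mul_one_sub_mul_exp_smul_zero_iff _ _ _ _
    _ ↔ (U * (diagonal d * B) * Uᵀ).IsSymm := by
        rw [forall_trace_mul_hat_eq_zero_iff]
        simp only [Matrix.mul_assoc, ← Matrix.mul_assoc Uᵀ, hU, one_mul]
    _ ↔ (diagonal d * B).IsSymm := isSymm_mul_mul_transpose_iff hU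
    _ ↔ B ∈ diagRotations := isSymm_diagonal_mul_iff_mem_diagRotations hGpos hd hB
      (hBdet.trans hQdet)
    _ ↔ _ := by
        rw [← (mul_mul_transpose_injective hU).mem_set_image]
        simp only [diagRotations, Set.image_insert_eq, Set.image_singleton, Matrix.mul_one, hU']
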